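/- arXiv:2007.09776 — 3 statements merged into one kernel-verified Lean document; each statement's English description precedes it below -/
import Mathlib

section
/- Let $c \in \mathbb{R}^n$ with $c_1 = 0$, $L_{i,j} = \delta_{i,j+1}$, $\Delta c = c - Lc$, and let $b^F, c^F \in \mathbb{R}^m$ satisfy $b^{FT}\mathbbm{1} = 1$ and $b^{FT}c^F = 1/2$. Define $\Delta C \in \mathbb{R}^{n\times n}$ by $\Delta C_{i,j} = \Delta c_j$ if $j \le i$ and $0$ otherwise, and $\mathbf{A}^{SF} := \Delta C \otimes b^{FT}$, $\mathbf{c}^{F} := Lc \otimes \mathbbm{1} + \Delta c \otimes c^F$. Then $\mathbf{A}^{SF}\mathbf{c}^{F} = \tfrac{1}{2} c^{\times 2}$, where $c^{\times 2}$ is the entrywise square. -/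
/-!
Contracting the fast index against `b^F` (using `∑ b^F = 1`, `∑ b^F c^F = 1/2`) turns row `i`
of `𝐀^{SF} 𝐜^F` into `∑_{j ≤ i} Δc_j ((Lc)_j + Δc_j / 2)`. Since `Δc = c - Lc`, each term is
`(c_j² - (Lc)_j²) / 2`, and because `(Lc)_0 = 0`, `(Lc)_{j+1} = c_j` the sum telescopes
to `c_i² / 2`.
-/

open Finset

lemma Fin.sum_Iic_sub_of_shift {M : Type*} [AddCommGroup M] {n : ℕ} (f g : Fin (n + 1) → M)
    (hg0 : g 0 = 0) (hg : ∀ j : Fin n, g j.succ = f j.castSucc) (i : Fin (n + 1)) :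
    ∑ j ∈ Iic i, (f j - g j) = f i := by
  induction i using Fin.induction with
  | zero => rw [← bot_eq_zero, Iic_bot, sum_singleton, bot_eq_zero, hg0, sub_zero]
  | succ i ih =>
    have hIic : Iic i.succ = insert i.succ (Iic i.castSucc) := by
      ext j
      simp only [mem_insert, mem_Iic, Fin.le_def, Fin.ext_iff, Fin.val_succ, Fin.val_castSucc]
      omega
    rw [hIic, sum_insert (by simp), ih, hg, sub_add_cancel]

section subdiagonal

variable {R : Type*} [NonAssocSemiring R] {n : ℕ} {L : Matrix (Fin (n + 1)) (Fin (n + 1)) R}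

lemma mulVec_subdiag_zero (hL : ∀ i j, L i j = if (i : ℕ) = (j : ℕ) + 1 then 1 else 0)
    (c : Fin (n + 1) → R) : L.mulVec c 0 = 0 := by
  simp [Matrix.mulVec, dotProduct, hL]

lemma mulVec_subdiag_succ (hL : ∀ i j, L i j = if (i : ℕ) = (j : ℕ) + 1 then 1 else 0)
    (c : Fin (n + 1) → R) (j : Fin n) : L.mulVec c j.succ = c j.castSucc := by
  have hval (x : Fin (n + 1)) : ((j : ℕ) = x) ↔ j.castSucc = x := by
    rw [← Fin.val_inj, Fin.val_castSucc]
  simp [Matrix.mulVec, dotProduct, hL, hval]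

end subdiagonal

lemma sum_prod_mul_add_mul {ι κ R : Type*} [Fintype ι] [Fintype κ] [CommSemiring R]
    (a u v : ι → R) (b d : κ → R) :
    ∑ x : ι × κ, a x.1 * b x.2 * (u x.1 + v x.1 * d x.2)
      = ∑ j, a j * (u j * ∑ l, b l + v j * ∑ l, b l * d l) := by
  simp only [Fintype.sum_prod_type, mul_sum, ← sum_add_distrib]
  congr! 2 with j - l
  ring

theorem stmt13_general (n m : ℕ) (c : Fin (n+1) → ℝ)
    (L : Matrix (Fin (n+1)) (Fin (n+1)) ℝ)
    (hL : ∀ i j, L i j = if (i : ℕ) = (j : ℕ) + 1 then 1 else 0)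
    (Δc : Fin (n+1) → ℝ) (hΔc : Δc = c - L.mulVec c)
    (bF cF : Fin m → ℝ) (hb1 : ∑ l, bF l = 1) (hbc : ∑ l, bF l * cF l = 1/2)
    (ΔC : Matrix (Fin (n+1)) (Fin (n+1)) ℝ)
    (hΔC : ∀ i j, ΔC i j = if j ≤ i then Δc j else 0)
    (ASF : Matrix (Fin (n+1)) (Fin (n+1) × Fin m) ℝ)
    (hASF : ∀ i x, ASF i x = ΔC i x.1 * bF x.2)
    (cFvec : Fin (n+1) × Fin m → ℝ)
    (hcF : ∀ x, cFvec x = L.mulVec c x.1 + Δc x.1 * cF x.2) :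
    ∀ i, ∑ x : Fin (n+1) × Fin m, ASF i x * cFvec x = (1/2) * (c i)^2 := by
  intro i
  have hΔ (j : Fin (n + 1)) : Δc j = c j - L.mulVec c j := by rw [hΔc, Pi.sub_apply]
  calc ∑ x, ASF i x * cFvec x
      = ∑ j, ΔC i j * (L.mulVec c j * ∑ l, bF l + Δc j * ∑ l, bF l * cF l) := by
        simp only [hASF, hcF]
        exact sum_prod_mul_add_mul _ _ _ _ _
    _ = ∑ j ∈ Iic i, Δc j * (L.mulVec c j + Δc j * (1 / 2)) := by
        simp only [hb1, hbc, mul_one, hΔC, ite_mul, zero_mul]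
        rw [← sum_filter, filter_ge_eq_Iic]
    _ = ∑ j ∈ Iic i, (1 / 2) * (c j ^ 2 - L.mulVec c j ^ 2) :=
        sum_congr rfl fun j _ => by rw [hΔ]; ring
    _ = (1 / 2) * c i ^ 2 := by
        rw [← mul_sum, Fin.sum_Iic_sub_of_shift (fun j => c j ^ 2) (fun j => L.mulVec c j ^ 2)]
        · rw [mulVec_subdiag_zero hL, sq, zero_mul]
        · intro j
          rw [mulVec_subdiag_succ hL]

/-- Simplifying formula `𝐀^{SF} 𝐜^{F} = ½ c^{×2}`, where
`𝐀^{SF} = ΔC ⊗ b^{F T}` and `𝐜^{F} = Lc ⊗ 𝟙 + Δc ⊗ c^F`, assuming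
`c 0 = 0`, `b^{F T}𝟙 = 1` and `b^{F T}c^F = 1/2`. -/
theorem stmt13 (n m : ℕ) (c : Fin (n+1) → ℝ) (hc0 : c 0 = 0)
    (L : Matrix (Fin (n+1)) (Fin (n+1)) ℝ)
    (hL : ∀ i j, L i j = if (i : ℕ) = (j : ℕ) + 1 then 1 else 0)
    (Δc : Fin (n+1) → ℝ) (hΔc : Δc = c - L.mulVec c)
    (bF cF : Fin m → ℝ) (hb1 : ∑ l, bF l = 1) (hbc : ∑ l, bF l * cF l = 1/2)
    (ΔC : Matrix (Fin (n+1)) (Fin (n+1)) ℝ)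
    (hΔC : ∀ i j, ΔC i j = if j ≤ i then Δc j else 0)
    (ASF : Matrix (Fin (n+1)) (Fin (n+1) × Fin m) ℝ)
    (hASF : ∀ i x, ASF i x = ΔC i x.1 * bF x.2)
    (cFvec : Fin (n+1) × Fin m → ℝ)
    (hcF : ∀ x, cFvec x = L.mulVec c x.1 + Δc x.1 * cF x.2) :
    ∀ i, ∑ x : Fin (n+1) × Fin m, ASF i x * cFvec x = (1/2) * (c i)^2 :=
  stmt13_general n m c L hL Δc hΔc bF cF hb1 hbc ΔC hΔC ASF hASF cFvec hcF
end

section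
/- Let $c \in \mathbb{R}^n$ with $c_1 = 0$, $L_{i,j}=\delta_{i,j+1}$, $\Delta c = c - Lc$, and let $(A^F, b^F, c^F)$ be an $m$-stage Runge–Kutta method with $A^F\mathbbm{1} = c^F$, $b^{FT}\mathbbm{1} = 1$ and $b^{FT}c^F = 1/2$. Define $\Delta C_{i,j} = \Delta c_j \cdot [j \le i]$, $\mathbf{A}^{FF} := \mathrm{diag}(\Delta c)\otimes A^F + L\Delta C \otimes \mathbbm{1}b^{FT}$ and $\mathbf{c}^{F} := Lc\otimes\mathbbm{1} + \Delta c\otimes c^F$. Then $\mathbf{A}^{FF}\mathbf{c}^{F} = \tfrac{1}{2}(Lc)^{\times 2}\otimes\mathbbm{1} + \big((Lc)\times\Delta c\big)\otimes c^F + \Delta c^{\times 2}\otimes(A^F c^F)$. -/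
open Finset

/-- Simplifying formula (eq:Affcf):
`𝐀^{FF} 𝐜^{F} = ½(Lc)^{×2} ⊗ 𝟙 + ((Lc)×Δc) ⊗ c^F + Δc^{×2} ⊗ (A^F c^F)`,
where `𝐀^{FF} = diag(Δc) ⊗ A^F + LΔC ⊗ 𝟙 b^{F T}` and `𝐜^{F} = Lc ⊗ 𝟙 + Δc ⊗ c^F`,
assuming `c 0 = 0`, `A^F 𝟙 = c^F`, `b^{F T}𝟙 = 1` and `b^{F T}c^F = 1/2`. -/
theorem stmt14 (n m : ℕ) (c : Fin (n+1) → ℝ) (hc0 : c 0 = 0)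
    (L : Matrix (Fin (n+1)) (Fin (n+1)) ℝ)
    (hL : ∀ i j, L i j = if (i : ℕ) = (j : ℕ) + 1 then 1 else 0)
    (Δc : Fin (n+1) → ℝ) (hΔc : Δc = c - L.mulVec c)
    (AF : Matrix (Fin m) (Fin m) ℝ) (bF cF : Fin m → ℝ)
    (hrow : AF.mulVec (fun _ => 1) = cF)
    (hb1 : ∑ l, bF l = 1) (hbc : ∑ l, bF l * cF l = 1/2)
    (AFF : Matrix (Fin (n+1) × Fin m) (Fin (n+1) × Fin m) ℝ)
    (hAFF : ∀ p q : Fin (n+1) × Fin m,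
      AFF p q = (if q.1 = p.1 then Δc p.1 * AF p.2 q.2 else 0) +
        (if q.1 < p.1 then Δc q.1 * bF q.2 else 0))
    (cFvec : Fin (n+1) × Fin m → ℝ)
    (hcF : ∀ x, cFvec x = L.mulVec c x.1 + Δc x.1 * cF x.2) :
    ∀ p : Fin (n+1) × Fin m,
      ∑ q : Fin (n+1) × Fin m, AFF p q * cFvec q =
        (1/2) * (L.mulVec c p.1)^2 + (L.mulVec c p.1) * Δc p.1 * cF p.2 +
          (Δc p.1)^2 * (AF.mulVec cF) p.2 := by
  have hLc0 : L.mulVec c 0 = 0 := by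
    simp only [Matrix.mulVec, dotProduct, hL]
    apply Finset.sum_eq_zero
    intro j _
    simp
  have hLcsucc : ∀ i : Fin n, L.mulVec c i.succ = c i.castSucc := by
    intro i
    simp only [Matrix.mulVec, dotProduct, hL]
    rw [Finset.sum_eq_single i.castSucc]
    · simp
    · intro b _ hb
      have : ((i.succ : Fin (n+1)) : ℕ) ≠ (b : ℕ) + 1 := by
        simp only [Fin.val_succ]
        intro h
        apply hb
        apply Fin.ext
        simpa [Fin.coe_castSucc] using h.symm
      rw [if_neg this, zero_mul]
    · simp
  have tele : ∀ i : Fin (n+1),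
      ∑ j : Fin (n+1), (if j < i then Δc j * L.mulVec c j + (1/2) * (Δc j)^2 else 0)
        = (1/2) * (L.mulVec c i)^2 := by
    intro i
    induction i using Fin.induction with
    | zero =>
        rw [hLc0]
        simp [Fin.not_lt_zero]
    | succ i ih =>
        have hsplit : ∀ j : Fin (n+1),
            (if j < i.succ then Δc j * L.mulVec c j + (1/2) * (Δc j)^2 else 0)
            = (if j < i.castSucc then Δc j * L.mulVec c j + (1/2) * (Δc j)^2 else 0)
              + (if j = i.castSucc then Δc j * L.mulVec c j + (1/2) * (Δc j)^2 else 0) := by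
          intro j
          rcases lt_trichotomy j i.castSucc with h | h | h
          · have h1 : j < i.succ := h.trans Fin.castSucc_lt_succ
            simp [h1, h, h.ne]
          · subst h
            simp [Fin.castSucc_lt_succ, lt_irrefl]
          · have h1 : ¬ j < i.succ := by
              rw [Fin.lt_iff_val_lt_val] at h ⊢
              simp only [Fin.val_succ, Fin.coe_castSucc] at *
              omega
            simp [h1, h.ne', not_lt.mpr h.le]
        rw [Finset.sum_congr rfl (fun j _ => hsplit j), Finset.sum_add_distrib, ih,
          Finset.sum_ite_eq' Finset.univ i.castSucc]
        simp only [Finset.mem_univ, if_true]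
        rw [hLcsucc i]
        have hΔ : Δc i.castSucc = c i.castSucc - L.mulVec c i.castSucc := by
          rw [hΔc]; rfl
        rw [hΔ]; ring
  rintro ⟨i, k⟩
  have hrowk : ∑ l, AF k l = cF k := by
    have := congrFun hrow k
    simpa [Matrix.mulVec, dotProduct] using this
  have hAFcF : AF.mulVec cF k = ∑ l, AF k l * cF l := rfl
  have hinner : ∀ j : Fin (n+1),
      ∑ l : Fin m, AFF (i,k) (j,l) * cFvec (j,l)
      = (if j = i then Δc i * (cF k * L.mulVec c i + Δc i * (AF.mulVec cF) k) else 0)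
        + (if j < i then Δc j * L.mulVec c j + (1/2) * (Δc j)^2 else 0) := by
    intro j
    simp only [hAFF, hcF]
    by_cases hji : j = i
    · subst hji
      rw [Finset.sum_congr rfl (fun l _ => show
          ((if j = j then Δc j * AF k l else 0) + (if j < j then Δc j * bF l else 0))
            * (L.mulVec c j + Δc j * cF l)
          = (Δc j * L.mulVec c j) * AF k l + (Δc j * Δc j) * (AF k l * cF l) by
            rw [if_pos rfl, if_neg (lt_irrefl j)]; ring)]
      rw [if_pos rfl, if_neg (lt_irrefl j), add_zero,
        Finset.sum_add_distrib, ← Finset.mul_sum, ← Finset.mul_sum, hrowk, hAFcF]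
      ring
    · simp only [if_neg hji, zero_add]
      by_cases hlt : j < i
      · simp only [if_pos hlt]
        rw [Finset.sum_congr rfl (fun l _ => show
            (Δc j * bF l) * (L.mulVec c j + Δc j * cF l)
            = (Δc j * L.mulVec c j) * bF l + (Δc j * Δc j) * (bF l * cF l) by ring)]
        rw [Finset.sum_add_distrib, ← Finset.mul_sum, ← Finset.mul_sum, hb1, hbc]
        ring
      · simp [hlt]
  rw [Fintype.sum_prod_type]
  rw [Finset.sum_congr rfl (fun j _ => hinner j), Finset.sum_add_distrib,
    Finset.sum_ite_eq' Finset.univ i, tele i]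
  simp only [Finset.mem_univ, if_true]
  ring
end

section
/- Let $b, c \in \mathbb{R}^n$ with $c_1 = 0$, $L_{i,j}=\delta_{i,j+1}$, $\Delta c = c - Lc$, and $D$ the upper-triangular matrix of ones ($D_{i,j} = [j \ge i]$). Then $\big(\Delta c \times (Db)\big)^T\Big(\tfrac12 (Lc)^{\times 2} + \tfrac12 (Lc)\times\Delta c + \tfrac16 \Delta c^{\times 2}\Big) = \tfrac16\, b^T c^{\times 3}$, where $\times$ denotes entrywise product. -/
/-!
Entrywise, `Δc × (½(Lc)² + ½(Lc)Δc + ⅙Δc²) = ⅙(c³ - (Lc)³)`, and since `L` is a shift,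
`(Lc)³ = L(c³)`. So the left side is `⅙ (Db)ᵀ (1 - L) c³`, and `Dᵀ (1 - L) = 1`: summing
differences telescopes (Abel summation).
-/

open Finset Matrix

def shiftMatrix (R : Type*) [Zero R] [One R] (n : ℕ) : Matrix (Fin (n+1)) (Fin (n+1)) R :=
  of fun i j => if (i : ℕ) = (j : ℕ) + 1 then 1 else 0

def upperOnes (R : Type*) [Zero R] [One R] (n : ℕ) : Matrix (Fin (n+1)) (Fin (n+1)) R :=
  of fun i j => if i ≤ j then 1 else 0

section

variable {R : Type*} [CommRing R] {n : ℕ}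

@[simp]
theorem shiftMatrix_mulVec_zero (v : Fin (n+1) → R) : (shiftMatrix R n *ᵥ v) 0 = 0 := by
  simp [shiftMatrix, mulVec, dotProduct]

@[simp]
theorem shiftMatrix_mulVec_succ (v : Fin (n+2) → R) (k : Fin (n+1)) :
    (shiftMatrix R (n+1) *ᵥ v) k.succ = v k.castSucc := by
  simp [shiftMatrix, mulVec, dotProduct, Fin.sum_univ_castSucc, Fin.val_inj, k.is_lt.ne]

theorem shiftMatrix_mulVec_pow (v : Fin (n+1) → R) {m : ℕ} (hm : m ≠ 0) :
    (shiftMatrix R n *ᵥ v) ^ m = shiftMatrix R n *ᵥ v ^ m := by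
  funext i
  induction i using Fin.cases with
  | zero => simp [hm]
  | succ k =>
    cases n with
    | zero => exact k.elim0
    | succ n => simp

theorem upperOnes_transpose_mul_shiftMatrix :
    (upperOnes R n)ᵀ * shiftMatrix R n = (upperOnes R n)ᵀ - 1 := by
  ext j k
  simp only [mul_apply, transpose_apply, upperOnes, shiftMatrix, of_apply, Matrix.sub_apply,
    one_apply, Fin.le_iff_val_le_val, mul_ite, mul_one, mul_zero]
  rw [Fin.sum_univ_eq_sum_range
    (fun i => if i = (k : ℕ) + 1 then if i ≤ (j : ℕ) then (1 : R) else 0 else 0),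
    Finset.sum_ite_eq']
  simp only [mem_range]
  split_ifs <;> simp_all [Fin.ext_iff] <;> omega

theorem upperOnes_transpose_mul_one_sub_shiftMatrix :
    (upperOnes R n)ᵀ * (1 - shiftMatrix R n) = 1 := by
  rw [mul_sub, mul_one, upperOnes_transpose_mul_shiftMatrix, sub_sub_cancel]

theorem upperOnes_mulVec_dotProduct_one_sub_shiftMatrix_mulVec (b w : Fin (n+1) → R) :
    (upperOnes R n *ᵥ b) ⬝ᵥ ((1 - shiftMatrix R n) *ᵥ w) = b ⬝ᵥ w := by
  rw [dotProduct_mulVec, ← vecMul_transpose, vecMul_vecMul,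
    upperOnes_transpose_mul_one_sub_shiftMatrix, vecMul_one]

end

theorem sub_mul_quadratic_eq_cube_sub_cube {K : Type*} [Field K] [CharZero K] (x y : K) :
    (x - y) * (1/2 * y ^ 2 + 1/2 * y * (x - y) + 1/6 * (x - y) ^ 2) = 1/6 * (x ^ 3 - y ^ 3) := by
  ring

theorem stmt18_general (n : ℕ) (b c : Fin (n+1) → ℝ)
    (L D : Matrix (Fin (n+1)) (Fin (n+1)) ℝ)
    (hL : ∀ i j, L i j = if (i : ℕ) = (j : ℕ) + 1 then 1 else 0)
    (hD : ∀ i j, D i j = if i ≤ j then 1 else 0)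
    (Δc : Fin (n+1) → ℝ) (hΔc : Δc = c - L.mulVec c) :
    ∑ i, (Δc i * (D.mulVec b) i) *
        ((1/2) * (L.mulVec c i)^2 + (1/2) * (L.mulVec c i) * Δc i + (1/6) * (Δc i)^2) =
      (1/6) * ∑ i, b i * (c i)^3 := by
  obtain rfl : L = shiftMatrix ℝ n := Matrix.ext hL
  obtain rfl : D = upperOnes ℝ n := Matrix.ext hD
  subst hΔc
  calc _ = ∑ i, 1/6 * ((upperOnes ℝ n *ᵥ b) i * (c i ^ 3 - (shiftMatrix ℝ n *ᵥ c) i ^ 3)) := by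
        refine sum_congr rfl fun i _ => ?_
        rw [mul_left_comm, ← sub_mul_quadratic_eq_cube_sub_cube, Pi.sub_apply]
        ring
    _ = 1/6 * ((upperOnes ℝ n *ᵥ b) ⬝ᵥ ((1 - shiftMatrix ℝ n) *ᵥ c ^ 3)) := by
        simp only [sub_mulVec, one_mulVec, ← shiftMatrix_mulVec_pow c three_ne_zero, dotProduct,
          mul_sum, Pi.sub_apply, Pi.pow_apply]
    _ = 1/6 * ∑ i, b i * c i ^ 3 := by
        rw [upperOnes_mulVec_dotProduct_one_sub_shiftMatrix_mulVec]
        rfl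

/-- `(Δc × (Db))ᵀ (½(Lc)^{×2} + ½(Lc)×Δc + ⅙Δc^{×2}) = ⅙ bᵀ c^{×3}` with `c 0 = 0`,
`L` the shift matrix, `Δc = c - Lc`, `D` the upper-triangular matrix of ones. -/
theorem stmt18 (n : ℕ) (b c : Fin (n+1) → ℝ) (hc0 : c 0 = 0)
    (L D : Matrix (Fin (n+1)) (Fin (n+1)) ℝ)
    (hL : ∀ i j, L i j = if (i : ℕ) = (j : ℕ) + 1 then 1 else 0)
    (hD : ∀ i j, D i j = if i ≤ j then 1 else 0)
    (Δc : Fin (n+1) → ℝ) (hΔc : Δc = c - L.mulVec c) :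
    ∑ i, (Δc i * (D.mulVec b) i) *
        ((1/2) * (L.mulVec c i)^2 + (1/2) * (L.mulVec c i) * Δc i + (1/6) * (Δc i)^2) =
      (1/6) * ∑ i, b i * (c i)^3 :=
  stmt18_general n b c L D hL hD Δc hΔc
end
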